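/- Let n and t be positive integers, let G be a simple graph on n vertices containing no 3-cycle and no 5-cycle, and let v be a vertex of G with degree k₁(v). If α(G) < t < n − k₁(v) + 1, then k₁(v) + f(n − k₁(v) − t + 1) < t. -/

import Mathlib

noncomputable section

/-- the independence number of a graph -/
def indepNum {V : Type*} [Fintype V] (G : SimpleGraph V) : ℕ :=
  sSup {n | ∃ s : Finset V, s.card = n ∧ ∀ x ∈ s, ∀ y ∈ s, x ≠ y → ¬ G.Adj x y}

/-- `G` contains a cycle of length `m` -/
def HasCycleOfLength {V : Type*} (G : SimpleGraph V) (m : ℕ) : Prop :=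
  ∃ (v : V) (c : G.Walk v v), c.IsCycle ∧ c.length = m

/-- `G` contains no cycle of length 3 and no cycle of length 5 -/
def NoC3C5 {V : Type*} (G : SimpleGraph V) : Prop :=
  ¬ HasCycleOfLength G 3 ∧ ¬ HasCycleOfLength G 5

/-- `f n` is the minimum independence number among graphs on `n` vertices with
no 3-cycle and no 5-cycle -/
def fmin (n : ℕ) : ℕ :=
  sInf {k | ∃ G : SimpleGraph (Fin n), NoC3C5 G ∧ indepNum G = k}


/-!
Let `N` be the neighbourhood of `v` and `S` the set of ends of walks of length two from `v`.
Without triangles `N` is independent and disjoint from `S`; without 5-cycles as well, `S` is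
independent, so `|S| ≤ α(G) < t` and at least `n - k - t + 1` vertices lie outside `N ∪ S`.
None of them has a neighbour in `N`, so an independent set `I` among them extends to the
independent set `I ∪ N`. Taking `I` maximum in a subgraph induced on `n - k - t + 1` of them
gives `f(n - k - t + 1) + k ≤ α(G) < t`.
-/

theorem indepNum_eq_simpleGraph_indepNum {V : Type*} [Fintype V] (G : SimpleGraph V) :
    indepNum G = G.indepNum := by
  simp only [indepNum, SimpleGraph.indepNum, SimpleGraph.isNIndepSet_iff,
    SimpleGraph.isIndepSet_iff, Set.Pairwise, Finset.mem_coe, and_comm]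

section Cycles

variable {V W : Type*} {G : SimpleGraph V} {H : SimpleGraph W}

theorem HasCycleOfLength.map (f : G ↪g H) {m : ℕ} :
    HasCycleOfLength G m → HasCycleOfLength H m
  | ⟨v, c, hc, hl⟩ =>
    ⟨f v, c.map f.toHom, hc.map f.injective, by rw [SimpleGraph.Walk.length_map, hl]⟩

theorem hasCycleOfLength_five {a b c d e : V}
    (hab : G.Adj a b) (hbc : G.Adj b c) (hcd : G.Adj c d) (hde : G.Adj d e) (hea : G.Adj e a)
    (hac : a ≠ c) (had : a ≠ d) (hbd : b ≠ d) (hbe : b ≠ e) (hce : c ≠ e) :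
    HasCycleOfLength G 5 := by
  refine ⟨a, .cons hab (.cons hbc (.cons hcd (.cons hde (.cons hea .nil)))), ?_, rfl⟩
  rw [SimpleGraph.Walk.cons_isCycle_iff]
  have := hab.ne; have := hbc.ne; have := hcd.ne; have := hde.ne; have := hea.ne
  simp [SimpleGraph.Walk.isPath_def]
  grind

theorem NoC3C5.of_embedding (f : G ↪g H) (hH : NoC3C5 H) : NoC3C5 G :=
  ⟨fun h => hH.1 (h.map f), fun h => hH.2 (h.map f)⟩

theorem NoC3C5.cliqueFree_three (hG : NoC3C5 G) : G.CliqueFree 3 := fun s hs =>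
  hG.1 (SimpleGraph.is3Clique_iff_exists_cycle_length_three.1 ⟨s, hs⟩)

end Cycles

namespace SimpleGraph

open Finset

variable {V W : Type*} {G : SimpleGraph V} {H : SimpleGraph W}

theorem ncard_neighborSet_eq_degree [Fintype V] [DecidableRel G.Adj] (v : V) :
    (G.neighborSet v).ncard = G.degree v := by
  rw [← card_neighborFinset_eq_degree, neighborFinset_def, Set.ncard_eq_toFinset_card']

theorem IsIndepSet.image_embedding (f : G ↪g H) {s : Set V} (hs : G.IsIndepSet s) :
    H.IsIndepSet (f '' s) := by
  rintro _ ⟨x, hx, rfl⟩ _ ⟨y, hy, rfl⟩ hxy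
  rw [f.map_adj_iff]
  exact hs hx hy (ne_of_apply_ne f hxy)

theorem Embedding.indepNum_le [Finite W] (f : G ↪g H) : G.indepNum ≤ H.indepNum := by
  classical
  obtain ⟨s, hs, hcard⟩ := G.exists_isNIndepSet_indepNum
  calc G.indepNum = #(s.map f.toEmbedding) := by rw [card_map, hcard]
    _ ≤ H.indepNum := IsIndepSet.card_le_indepNum (by
        rw [coe_map]; exact hs.image_embedding f)

theorem Iso.indepNum_eq [Finite V] [Finite W] (e : G ≃g H) : G.indepNum = H.indepNum :=
  le_antisymm e.toEmbedding.indepNum_le e.symm.toEmbedding.indepNum_le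

theorem not_adj_of_cliqueFree_three (h : G.CliqueFree 3) {a b c : V} (hab : G.Adj a b)
    (hbc : G.Adj b c) : ¬ G.Adj a c := by
  classical
  exact fun hac => h {a, b, c} (is3Clique_triple_iff.2 ⟨hab, hac, hbc⟩)

variable [Fintype V] [DecidableRel G.Adj]

-- Contains `v` itself unless `v` is isolated.
def twoStepFinset (v : V) : Finset V :=
  {x | ∃ w, G.Adj v w ∧ G.Adj w x}

@[simp]
theorem mem_twoStepFinset {v x : V} : x ∈ G.twoStepFinset v ↔ ∃ w, G.Adj v w ∧ G.Adj w x := by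
  simp [twoStepFinset]

theorem disjoint_neighborFinset_twoStepFinset (h : G.CliqueFree 3) (v : V) :
    Disjoint (G.neighborFinset v) (G.twoStepFinset v) := by
  simp only [Finset.disjoint_left, mem_twoStepFinset, mem_neighborFinset, not_exists, not_and]
  exact fun x hvx w hvw hwx => not_adj_of_cliqueFree_three h hvw hwx hvx

theorem indepNum_induce_add_degree_le [DecidableEq V] (h : G.CliqueFree 3) (v : V)
    {s : Finset V} (hs : Disjoint s (G.neighborFinset v ∪ G.twoStepFinset v)) :
    (G.induce (s : Set V)).indepNum + G.degree v ≤ G.indepNum := by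
  obtain ⟨t, ht, hcard⟩ := (G.induce (s : Set V)).exists_isNIndepSet_indepNum
  set u := t.map (Embedding.induce (s : Set V)).toEmbedding
  have hus : u ⊆ s := by
    intro x hx
    obtain ⟨y, -, rfl⟩ := mem_map.1 hx
    exact y.2
  have hu : G.IsIndepSet (u : Set V) := by
    rw [coe_map]
    exact ht.image_embedding _
  have hN : G.IsIndepSet (G.neighborFinset v : Set V) := by
    rw [coe_neighborFinset]
    exact isIndepSet_neighborSet_of_triangleFree _ h v
  have huN : G.IsIndepSet (u ∪ G.neighborFinset v : Set V) := by
    refine (isIndepSet_iff G).2 (Set.pairwise_union.2 ⟨hu, hN, fun x hx y hy _ => ?_⟩)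
    have hx : x ∉ G.twoStepFinset v := Finset.disjoint_left.1 hs (hus hx) ∘ mem_union_right _
    have hyx : ¬ G.Adj y x := fun hyx =>
      hx (mem_twoStepFinset.2 ⟨y, (mem_neighborFinset ..).1 hy, hyx⟩)
    exact ⟨fun hxy => hyx hxy.symm, hyx⟩
  have hdisj : Disjoint u (G.neighborFinset v) :=
    disjoint_of_subset_left hus (disjoint_union_right.1 hs).1
  calc (G.induce (s : Set V)).indepNum + G.degree v = #(u ∪ G.neighborFinset v) := by
        rw [card_union_of_disjoint hdisj, card_map, hcard, card_neighborFinset_eq_degree]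
    _ ≤ G.indepNum := by
        rw [← coe_union] at huN
        exact huN.card_le_indepNum

end SimpleGraph

theorem fmin_card_le_indepNum {W : Type*} [Fintype W] {H : SimpleGraph W} (hH : NoC3C5 H) :
    fmin (Fintype.card W) ≤ H.indepNum :=
  Nat.sInf_le ⟨H.overFin rfl, hH.of_embedding (H.overFinIso rfl).symm.toEmbedding,
    by rw [indepNum_eq_simpleGraph_indepNum, (H.overFinIso rfl).indepNum_eq]⟩

namespace NoC3C5

open SimpleGraph Finset

variable {V : Type*} [Fintype V] {G : SimpleGraph V} [DecidableRel G.Adj]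

theorem isIndepSet_twoStepFinset (hG : NoC3C5 G) (v : V) :
    G.IsIndepSet (G.twoStepFinset v : Set V) := by
  have h3 := hG.cliqueFree_three
  rintro x hx y hy hxy hadj
  rw [mem_coe, mem_twoStepFinset] at hx hy
  obtain ⟨w₁, hvw₁, hw₁x⟩ := hx
  obtain ⟨w₂, hvw₂, hw₂y⟩ := hy
  -- a coincidence among the vertices of the closed walk `v w₁ x y w₂ v` closes a triangle
  have hvx : v ≠ x := by rintro rfl; exact not_adj_of_cliqueFree_three h3 hvw₂ hw₂y hadj
  have hvy : v ≠ y := by rintro rfl; exact not_adj_of_cliqueFree_three h3 hvw₁ hw₁x hadj.symm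
  have hw₁y : w₁ ≠ y := by rintro rfl; exact not_adj_of_cliqueFree_three h3 hvw₂ hw₂y hvw₁
  have hxw₂ : x ≠ w₂ := by rintro rfl; exact not_adj_of_cliqueFree_three h3 hvw₁ hw₁x hvw₂
  have hw₁w₂ : w₁ ≠ w₂ := by
    rintro rfl; exact not_adj_of_cliqueFree_three h3 hw₁x.symm hw₂y hadj
  exact hG.2 (hasCycleOfLength_five hvw₁ hw₁x hadj hw₂y.symm hvw₂.symm hvx hvy hw₁y hw₁w₂ hxw₂)

theorem card_sub_indepNum_sub_degree_le [DecidableEq V] (hG : NoC3C5 G) (v : V) :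
    Fintype.card V - G.indepNum - G.degree v ≤ #(G.neighborFinset v ∪ G.twoStepFinset v)ᶜ := by
  rw [card_compl,
    card_union_of_disjoint (disjoint_neighborFinset_twoStepFinset hG.cliqueFree_three v),
    card_neighborFinset_eq_degree]
  have := (hG.isIndepSet_twoStepFinset v).card_le_indepNum
  omega

theorem fmin_card_add_degree_le [DecidableEq V] (hG : NoC3C5 G) (v : V) {s : Finset V}
    (hs : Disjoint s (G.neighborFinset v ∪ G.twoStepFinset v)) :
    fmin #s + G.degree v ≤ G.indepNum := by
  have hf := fmin_card_le_indepNum (hG.of_embedding (Embedding.induce (s : Set V)))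
  simp only [coe_sort_coe, Fintype.card_coe] at hf
  exact (Nat.add_le_add_right hf _).trans (indepNum_induce_add_degree_le hG.cliqueFree_three v hs)

end NoC3C5

theorem degree_condition_general (n t : ℕ)
    (G : SimpleGraph (Fin n)) (hG : NoC3C5 G) (v : Fin n)
    (h1 : indepNum G < t) (h2 : t < n - (G.neighborSet v).ncard + 1) :
    (G.neighborSet v).ncard + fmin (n - (G.neighborSet v).ncard - t + 1) < t := by
  classical
  rw [indepNum_eq_simpleGraph_indepNum] at h1
  rw [G.ncard_neighborSet_eq_degree] at h2 ⊢
  have hfar := hG.card_sub_indepNum_sub_degree_le v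
  rw [Fintype.card_fin] at hfar
  obtain ⟨s, hsF, hs⟩ := Finset.exists_subset_card_eq
    (le_trans (by omega : n - G.degree v - t + 1 ≤ n - G.indepNum - G.degree v) hfar)
  have hf := hG.fmin_card_add_degree_le v (Finset.disjoint_of_subset_left hsF disjoint_compl_left)
  rw [hs] at hf
  omega

/-- Degree condition: if `G` is a graph on `n` vertices with no 3-cycle and no
5-cycle, `v` a vertex of degree `k₁(v)`, and `α(G) < t < n − k₁(v) + 1`, then
`k₁(v) + f(n − k₁(v) − t + 1) < t`. -/
theorem degree_condition (n t : ℕ) (hn : 0 < n) (ht : 0 < t)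
    (G : SimpleGraph (Fin n)) (hG : NoC3C5 G) (v : Fin n)
    (h1 : indepNum G < t) (h2 : t < n - (G.neighborSet v).ncard + 1) :
    (G.neighborSet v).ncard + fmin (n - (G.neighborSet v).ncard - t + 1) < t :=
  degree_condition_general n t G hG v h1 h2

end
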